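/- Fix k with 1 ≤ k ≤ T−2. Suppose that for every bounded measurable f : 𝒳^{T−k−1} → ℝ, E[f(X_{k+2:T}) ∣ σ(h_k, X_{k+1})] = E[f(X_{k+2:T}) ∣ σ(X_{1:k+1})] μ-almost surely, and suppose next-token consistency holds at time k. Then h_k is a belief state for X_{1:k}. -/

import Mathlib

open MeasureTheory ProbabilityTheory

noncomputable section

/-- The tuple of tokens `(X_{s+1}, …, X_{s+n})`. -/
def tup {Ω 𝒳 : Type*} (X : ℕ → Ω → 𝒳) (s n : ℕ) (ω : Ω) : Fin n → 𝒳 :=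
  fun i => X (s + 1 + (i : ℕ)) ω

/-- Real-valued indicator of a set. -/
def ind {Ω : Type*} (A : Set Ω) : Ω → ℝ := A.indicator 1

/-!
Split the future according to the next token:
`f(X_{k+1:T}) = ∑ₐ 1{X_{k+1} = a} · fₐ(X_{k+2:T})`. By Doob–Dynkin,
`E[fₐ(X_{k+2:T}) ∣ h_k, X_{k+1}] = Φₐ(h_k, X_{k+1})`, and by hypothesis this is also the
conditional expectation given `X_{1:k+1}`. On `{X_{k+1} = a}` it equals `Φₐ(h_k, a)`, a function
of `h_k` alone, so the tower property and pulling out known factors give, under both `σ(h_k)`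
and `σ(X_{1:k})`, the term `Φₐ(h_k, a) · P(X_{k+1} = a ∣ ·)`; next-token consistency makes the
two conditional probabilities agree.
-/

section ConditionalExpectation

variable {Ω : Type*} {m m' mΩ : MeasurableSpace Ω} {μ : Measure Ω} [IsFiniteMeasure μ]

theorem condExp_indicator_eq_mul_condExp_indicator_one (hm : m ≤ m') (hm' : m' ≤ mΩ)
    {s : Set Ω} (hs : MeasurableSet[m'] s) {F φ : Ω → ℝ} (hF : Integrable F μ)
    (hφ : StronglyMeasurable[m] φ) (hFφ : ∀ᵐ ω ∂μ, ω ∈ s → μ[F|m'] ω = φ ω) :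
    μ[s.indicator F|m] =ᵐ[μ] φ * μ[s.indicator 1|m] := by
  have hind : s.indicator (μ[F|m']) =ᵐ[μ] φ * s.indicator 1 := by
    filter_upwards [hFφ] with ω hω
    by_cases hωs : ω ∈ s <;> simp [hωs, hω]
  have hφs : Integrable (φ * s.indicator 1) μ :=
    (integrable_condExp.indicator (hm' s hs)).congr hind
  calc μ[s.indicator F|m] =ᵐ[μ] μ[μ[s.indicator F|m']|m] :=
        (condExp_condExp_of_le hm hm').symm
    _ =ᵐ[μ] μ[φ * s.indicator 1|m] := condExp_congr_ae ((condExp_indicator hF hs).trans hind)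
    _ =ᵐ[μ] φ * μ[s.indicator 1|m] :=
      condExp_mul_of_stronglyMeasurable_left hφ hφs ((integrable_const 1).indicator (hm' s hs))

end ConditionalExpectation

section NextToken

variable {Ω 𝒳 H : Type*} {mΩ : MeasurableSpace Ω} {μ : Measure Ω} [IsFiniteMeasure μ]
  [MeasurableSpace 𝒳] [MeasurableSingletonClass 𝒳] [MeasurableSpace H]
  {R : Ω → H} {Y : Ω → 𝒳} {mk mk' : MeasurableSpace Ω}

theorem condExp_indicator_eq_of_condExp_eq
    (hRk : MeasurableSpace.comap R inferInstance ≤ mk) (hk : mk ≤ mk') (hk' : mk' ≤ mΩ)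
    (hY : Measurable[mk'] Y) {F : Ω → ℝ} (hF : Integrable F μ)
    (hfut : μ[F|MeasurableSpace.comap (fun ω => (R ω, Y ω)) inferInstance] =ᵐ[μ] μ[F|mk'])
    (a : 𝒳)
    (hnext : μ[ind {ω | Y ω = a}|MeasurableSpace.comap R inferInstance]
      =ᵐ[μ] μ[ind {ω | Y ω = a}|mk]) :
    μ[{ω | Y ω = a}.indicator F|MeasurableSpace.comap R inferInstance]
      =ᵐ[μ] μ[{ω | Y ω = a}.indicator F|mk] := by
  set mR : MeasurableSpace Ω := MeasurableSpace.comap R inferInstance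
  set mRY : MeasurableSpace Ω := MeasurableSpace.comap (fun ω => (R ω, Y ω)) inferInstance
  have hR : Measurable[mk'] R := measurable_iff_comap_le.2 (hRk.trans hk)
  have hRY : mRY ≤ mk' := (hR.prodMk hY).comap_le
  have hR_RY : mR ≤ mRY :=
    (measurable_fst.comp (comap_measurable (fun ω => (R ω, Y ω)))).comap_le
  have hs : MeasurableSet[mRY] {ω | Y ω = a} :=
    measurable_snd.comp (comap_measurable _) (measurableSet_singleton a)
  obtain ⟨Φ, hΦ, hΦ_eq⟩ :=
    (stronglyMeasurable_condExp (f := F) (μ := μ) (m := mRY)).exists_eq_measurable_comp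
  set φ : Ω → ℝ := fun ω => Φ (R ω, a)
  have hφ : StronglyMeasurable[mR] φ :=
    hΦ.comp_measurable (measurable_id.prodMk measurable_const |>.comp (comap_measurable R))
  have hFφ : ∀ ω, Y ω = a → μ[F|mRY] ω = φ ω := by
    rintro ω rfl
    rw [hΦ_eq]
    rfl
  calc μ[{ω | Y ω = a}.indicator F|mR]
      =ᵐ[μ] φ * μ[ind {ω | Y ω = a}|mR] :=
        condExp_indicator_eq_mul_condExp_indicator_one hR_RY (hRY.trans hk') hs hF hφ
          (ae_of_all _ hFφ)
    _ =ᵐ[μ] φ * μ[ind {ω | Y ω = a}|mk] := hnext.mul_left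
    _ =ᵐ[μ] μ[{ω | Y ω = a}.indicator F|mk] := by
      refine (condExp_indicator_eq_mul_condExp_indicator_one hk hk'
        (hY (measurableSet_singleton a)) hF (hφ.mono hRk) ?_).symm
      filter_upwards [hfut] with ω hω hYω
      exact hω ▸ hFφ ω hYω

theorem condExp_comp_eq_of_condExp_eq [Fintype 𝒳]
    (hRk : MeasurableSpace.comap R inferInstance ≤ mk) (hk : mk ≤ mk') (hk' : mk' ≤ mΩ)
    (hY : Measurable[mk'] Y) {F : 𝒳 → Ω → ℝ} (hF : ∀ a, Integrable (F a) μ)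
    (hfut : ∀ a,
      μ[F a|MeasurableSpace.comap (fun ω => (R ω, Y ω)) inferInstance] =ᵐ[μ] μ[F a|mk'])
    (hnext : ∀ a, μ[ind {ω | Y ω = a}|MeasurableSpace.comap R inferInstance]
      =ᵐ[μ] μ[ind {ω | Y ω = a}|mk]) :
    μ[fun ω => F (Y ω) ω|MeasurableSpace.comap R inferInstance]
      =ᵐ[μ] μ[fun ω => F (Y ω) ω|mk] := by
  have hsum : (fun ω => F (Y ω) ω) = ∑ a, {ω | Y ω = a}.indicator (F a) := by
    classical
    ext ω
    simp [Finset.sum_apply, Set.indicator_apply]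
  have hint : ∀ a ∈ Finset.univ, Integrable ({ω | Y ω = a}.indicator (F a)) μ :=
    fun a _ => (hF a).indicator (hk' _ (hY (measurableSet_singleton a)))
  rw [hsum]
  calc _ =ᵐ[μ] ∑ a, μ[{ω | Y ω = a}.indicator (F a)|MeasurableSpace.comap R inferInstance] :=
        condExp_finsetSum hint _
    _ =ᵐ[μ] ∑ a, μ[{ω | Y ω = a}.indicator (F a)|mk] :=
        eventuallyEq_sum fun a _ =>
          condExp_indicator_eq_of_condExp_eq hRk hk hk' hY (hF a) (hfut a) a (hnext a)
    _ =ᵐ[μ] _ := (condExp_finsetSum hint _).symm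

end NextToken

section Tuples

variable {Ω 𝒳 : Type*} (X : ℕ → Ω → 𝒳)

theorem tup_succ (s n : ℕ) (ω : Ω) :
    tup X s (n + 1) ω = Fin.cons (X (s + 1) ω) (tup X (s + 1) n ω) := by
  ext i
  refine Fin.cases ?_ (fun j => ?_) i
  · simp [tup]
  · simp only [tup, Fin.cons_succ, Fin.val_succ]
    ring_nf

variable [MeasurableSpace 𝒳]

theorem measurable_tup [MeasurableSpace Ω] (hX : ∀ t, Measurable (X t)) (s n : ℕ) :
    Measurable (tup X s n) :=
  measurable_pi_lambda _ fun _ => hX _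

theorem measurable_comap_tup_apply (s n : ℕ) (i : Fin n) :
    Measurable[MeasurableSpace.comap (tup X s n) inferInstance] (X (s + 1 + i)) :=
  (measurable_pi_apply i).comp (comap_measurable (tup X s n))

theorem comap_tup_mono (s : ℕ) {n n' : ℕ} (hn : n ≤ n') :
    MeasurableSpace.comap (tup X s n) inferInstance
      ≤ MeasurableSpace.comap (tup X s n') inferInstance := by
  let : MeasurableSpace Ω := MeasurableSpace.comap (tup X s n') inferInstance
  exact measurable_iff_comap_le.1 <| measurable_pi_iff.2 fun i =>
    measurable_comap_tup_apply X s n' (i.castLE hn)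

end Tuples

theorem middle_step_to_belief_state_general
    {Ω 𝒳 H : Type*}
    [MeasurableSpace Ω] [MeasurableSpace 𝒳] [DiscreteMeasurableSpace 𝒳]
    [Fintype 𝒳]
    [MeasurableSpace H]
    (μ : Measure Ω) [IsProbabilityMeasure μ]
    (T : ℕ)
    (X : ℕ → Ω → 𝒳) (hX : ∀ t, Measurable (X t))
    (h : ℕ → Ω → H) (g : (t : ℕ) → (Fin t → 𝒳) → H)
    (hg : ∀ t, 1 ≤ t → t ≤ T → Measurable (g t))
    (hgh : ∀ t, 1 ≤ t → t ≤ T → ∀ ω, h t ω = g t (tup X 0 t ω))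
    (k : ℕ) (hk1 : 1 ≤ k) (hk2 : k ≤ T - 2)
    -- conditioning on `σ(h_k, X_{k+1})` matches conditioning on `σ(X_{1:k+1})`
    (hmid : ∀ f : (Fin (T - (k + 1)) → 𝒳) → ℝ, Measurable f → (∃ C, ∀ y, |f y| ≤ C) →
      (μ[fun ω => f (tup X (k + 1) (T - (k + 1)) ω) |
          MeasurableSpace.comap (fun ω => (h k ω, X (k + 1) ω)) inferInstance])
        =ᵐ[μ]
      (μ[fun ω => f (tup X (k + 1) (T - (k + 1)) ω) |
          MeasurableSpace.comap (tup X 0 (k + 1)) inferInstance]))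
    -- next-token consistency at time `k`
    (hnext : ∀ a : 𝒳,
      (μ[ind {ω | X (k + 1) ω = a} | MeasurableSpace.comap (h k) inferInstance])
        =ᵐ[μ]
      (μ[ind {ω | X (k + 1) ω = a} | MeasurableSpace.comap (tup X 0 k) inferInstance])) :
    -- conclusion: `h k` is a belief state for `X_{1:k}`
    ∀ f : (Fin (T - k) → 𝒳) → ℝ, Measurable f → (∃ C, ∀ y, |f y| ≤ C) →
      (μ[fun ω => f (tup X k (T - k) ω) | MeasurableSpace.comap (h k) inferInstance])
        =ᵐ[μ]
      (μ[fun ω => f (tup X k (T - k) ω) |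
          MeasurableSpace.comap (tup X 0 k) inferInstance]) := by
  generalize hn : T - (k + 1) = n at hmid
  rw [show T - k = n + 1 by omega]
  rintro f hf ⟨C, hC⟩
  simp_rw [tup_succ]
  have hhk : Measurable[MeasurableSpace.comap (tup X 0 k) inferInstance] (h k) := by
    rw [funext (hgh k hk1 (by omega))]
    exact (hg k hk1 (by omega)).comp (comap_measurable (tup X 0 k))
  have hXk : Measurable[MeasurableSpace.comap (tup X 0 (k + 1)) inferInstance] (X (k + 1)) := by
    simpa [add_comm] using measurable_comap_tup_apply X 0 (k + 1) (Fin.last k)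
  have hfa : ∀ a, Measurable fun v => f (Fin.cons a v) := fun a => hf.comp (by fun_prop)
  have hF : ∀ a, Integrable (fun ω => f (Fin.cons a (tup X (k + 1) n ω))) μ := fun a =>
    .of_bound ((hfa a).comp (measurable_tup X hX _ _)).aestronglyMeasurable C
      (ae_of_all _ fun _ => hC _)
  exact condExp_comp_eq_of_condExp_eq hhk.comap_le (comap_tup_mono X 0 k.le_succ)
    (measurable_tup X hX 0 (k + 1)).comap_le hXk hF
    (fun a => hmid _ (hfa a) ⟨C, fun _ => hC _⟩) hnext

/-- Fix `1 ≤ k ≤ T-2`. If for every bounded measurable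
`f : 𝒳^{T-k-1} → ℝ`, `E[f(X_{k+2:T}) ∣ σ(h_k, X_{k+1})] = E[f(X_{k+2:T}) ∣ σ(X_{1:k+1})]`
μ-a.s., and next-token consistency holds at time `k`, then `h k` is a belief state for
`X_{1:k}`. -/
theorem middle_step_to_belief_state
    {Ω 𝒳 H : Type*}
    [MeasurableSpace Ω] [MeasurableSpace 𝒳] [DiscreteMeasurableSpace 𝒳]
    [Fintype 𝒳] [Nonempty 𝒳]
    [MeasurableSpace H] [StandardBorelSpace H]
    (μ : Measure Ω) [IsProbabilityMeasure μ]
    (T : ℕ) (hT : 2 ≤ T)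
    (X : ℕ → Ω → 𝒳) (hX : ∀ t, Measurable (X t))
    (h : ℕ → Ω → H) (g : (t : ℕ) → (Fin t → 𝒳) → H)
    (hg : ∀ t, 1 ≤ t → t ≤ T → Measurable (g t))
    (hgh : ∀ t, 1 ≤ t → t ≤ T → ∀ ω, h t ω = g t (tup X 0 t ω))
    (k : ℕ) (hk1 : 1 ≤ k) (hk2 : k ≤ T - 2)
    -- conditioning on `σ(h_k, X_{k+1})` matches conditioning on `σ(X_{1:k+1})`
    (hmid : ∀ f : (Fin (T - (k + 1)) → 𝒳) → ℝ, Measurable f → (∃ C, ∀ y, |f y| ≤ C) →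
      (μ[fun ω => f (tup X (k + 1) (T - (k + 1)) ω) |
          MeasurableSpace.comap (fun ω => (h k ω, X (k + 1) ω)) inferInstance])
        =ᵐ[μ]
      (μ[fun ω => f (tup X (k + 1) (T - (k + 1)) ω) |
          MeasurableSpace.comap (tup X 0 (k + 1)) inferInstance]))
    -- next-token consistency at time `k`
    (hnext : ∀ a : 𝒳,
      (μ[ind {ω | X (k + 1) ω = a} | MeasurableSpace.comap (h k) inferInstance])
        =ᵐ[μ]
      (μ[ind {ω | X (k + 1) ω = a} | MeasurableSpace.comap (tup X 0 k) inferInstance])) :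
    -- conclusion: `h k` is a belief state for `X_{1:k}`
    ∀ f : (Fin (T - k) → 𝒳) → ℝ, Measurable f → (∃ C, ∀ y, |f y| ≤ C) →
      (μ[fun ω => f (tup X k (T - k) ω) | MeasurableSpace.comap (h k) inferInstance])
        =ᵐ[μ]
      (μ[fun ω => f (tup X k (T - k) ω) |
          MeasurableSpace.comap (tup X 0 k) inferInstance]) :=
  middle_step_to_belief_state_general μ T X hX h g hg hgh k hk1 hk2 hmid hnext
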